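/- arXiv:0811.1734 — 2 statements merged into one kernel-verified Lean document; each statement's English description precedes it below -/
import Mathlib

section
/- Let n be a positive integer, let Ω ⊆ ℝⁿ be open with y ∈ Ω, let A : Ω → (n×n real matrices) be continuously differentiable with A(x) symmetric for each x, and let u : Ω → ℝ be twice continuously differentiable satisfying u(x) = (1/4) ⟨∇u(x), A(x) ∇u(x)⟩ for all x in a neighborhood of y. Suppose ∇u(y) = 0 and that the Hessian matrix H of u at y is invertible. Then A(y) is invertible and H = 2 A(y)⁻¹. -/
open scoped RealInnerProductSpace

/-!
Write `Φ x = ⟪∇u x, A x ∇u x⟫`, so that `u = Φ / 4` near `y`. Every term of the product-rule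
expansion of `DΦ` carries an undifferentiated factor `∇u`, which vanishes at `y`. Differentiating
once more at `y`, only the terms in which that factor gets differentiated survive, and the other
factors need only be continuous at `y`. This gives `H = (H A Hᵀ + (H A Hᵀ)ᵀ) / 4 = H A Hᵀ / 2`
for the symmetric `A = A y`; cancelling the invertible `H` leaves `A Hᵀ = 2`, i.e. `H = 2 A⁻¹`.
-/

open Filter Topology Asymptotics
open scoped Matrix

theorem ContinuousAt.hasFDerivAt_mul_of_eq_zero {E : Type*} [NormedAddCommGroup E]
    [NormedSpace ℝ E] {f g : E → ℝ} {g' : E →L[ℝ] ℝ} {y : E}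
    (hf : ContinuousAt f y) (hg : HasFDerivAt g g' y) (hg0 : g y = 0) :
    HasFDerivAt (fun x => f x * g x) (f y • g') y := by
  rw [hasFDerivAt_iff_isLittleO] at hg ⊢
  have hrem : (fun x => f x • (g x - g y - g' (x - y))) =o[𝓝 y] fun x => x - y := by
    simpa using (hf.isBigO_one ℝ).smul_isLittleO hg
  have hlin : (fun x => (f x - f y) • g' (x - y)) =o[𝓝 y] fun x => x - y := by
    have hf' : (fun x => f x - f y) =o[𝓝 y] fun _ => (1 : ℝ) :=
      (isLittleO_one_iff ℝ).2 (by simpa using hf.tendsto.sub_const (f y))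
    simpa using hf'.smul_isBigO (g'.isBigO_sub (𝓝 y) y)
  refine (hrem.add hlin).congr_left fun x => ?_
  simp only [hg0, smul_eq_mul, smul_apply]
  ring

section QuadForm

variable {E ι : Type*} [NormedAddCommGroup E] [NormedSpace ℝ E] [Fintype ι]

def quadForm (G : ι → E → ℝ) (a : ι → ι → E → ℝ) (x : E) : ℝ :=
  ∑ k, ∑ l, G k x * a k l x * G l x

variable {G : ι → E → ℝ} {a : ι → ι → E → ℝ}

/- Each term is arranged as (a factor continuous at `y`) * (a factor `G _ z`), the shape
consumed by `ContinuousAt.hasFDerivAt_mul_of_eq_zero`. -/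
theorem fderiv_quadForm_apply {z : E} (hG : ∀ k, DifferentiableAt ℝ (G k) z)
    (ha : ∀ k l, DifferentiableAt ℝ (a k l) z) (v : E) :
    fderiv ℝ (quadForm G a) z v = ∑ k, ∑ l,
      (fderiv ℝ (G k) z v * a k l z * G l z + fderiv ℝ (a k l) z v * G k z * G l z +
        a k l z * fderiv ℝ (G l) z v * G k z) := by
  have hQ : HasFDerivAt (quadForm G a) (∑ k, ∑ l,
      ((G k z * a k l z) • fderiv ℝ (G l) z + G l z • (G k z • fderiv ℝ (a k l) z +
        a k l z • fderiv ℝ (G k) z))) z :=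
    HasFDerivAt.fun_sum fun k _ => HasFDerivAt.fun_sum fun l _ =>
      ((hG k).hasFDerivAt.fun_mul (ha k l).hasFDerivAt).fun_mul (hG l).hasFDerivAt
  simp only [hQ.fderiv, sum_apply, add_apply, smul_apply, smul_eq_mul]
  exact Finset.sum_congr rfl fun k _ => Finset.sum_congr rfl fun l _ => by ring

variable {y : E}

theorem hasFDerivAt_fderiv_quadForm_apply (hG : ∀ k, ContDiffAt ℝ 1 (G k) y)
    (ha : ∀ k l, ContDiffAt ℝ 1 (a k l) y) (hG0 : ∀ k, G k y = 0) (v : E) :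
    HasFDerivAt (fun x => fderiv ℝ (quadForm G a) x v) (∑ k, ∑ l, a k l y •
      (fderiv ℝ (G k) y v • fderiv ℝ (G l) y + fderiv ℝ (G l) y v • fderiv ℝ (G k) y)) y := by
  have hdiff {f : E → ℝ} (hf : ContDiffAt ℝ 1 f y) : ∀ᶠ z in 𝓝 y, DifferentiableAt ℝ f z :=
    (hf.eventually (by simp)).mono fun z hz => hz.differentiableAt one_ne_zero
  have hcont {f : E → ℝ} (hf : ContDiffAt ℝ 1 f y) :
      ContinuousAt (fun z => fderiv ℝ f z v) y :=
    (hf.continuousAt_fderiv one_ne_zero).clm_apply continuousAt_const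
  have hterm {f g : E → ℝ} (hf : ContinuousAt f y) (hg : ContDiffAt ℝ 1 g y) (hg0 : g y = 0) :=
    hf.hasFDerivAt_mul_of_eq_zero (hg.differentiableAt one_ne_zero).hasFDerivAt hg0
  have hsum := HasFDerivAt.fun_sum (u := Finset.univ) fun k _ =>
    HasFDerivAt.fun_sum (u := Finset.univ) fun l _ =>
      ((hterm ((hcont (hG k)).mul (ha k l).continuousAt) (hG l) (hG0 l)).add
        (hterm ((hcont (ha k l)).mul (hG k).continuousAt) (hG l) (hG0 l))).add
        (hterm ((ha k l).continuousAt.mul (hcont (hG l))) (hG k) (hG0 k))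
  refine (hsum.congr_of_eventuallyEq ?_).congr_fderiv ?_
  · filter_upwards [eventually_all.2 fun k => hdiff (hG k),
      eventually_all.2 fun k => eventually_all.2 fun l => hdiff (ha k l)] with z hGz haz
    exact fderiv_quadForm_apply hGz haz v
  · simp only [Pi.mul_apply, hG0, mul_zero, zero_smul, add_zero]
    exact Finset.sum_congr rfl fun k _ => Finset.sum_congr rfl fun l _ => by module

theorem fderiv_fderiv_apply_of_eventuallyEq_smul_quadForm {u : E → ℝ} {c : ℝ}
    (hu : u =ᶠ[𝓝 y] c • quadForm G a) (hG : ∀ k, ContDiffAt ℝ 1 (G k) y)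
    (ha : ∀ k l, ContDiffAt ℝ 1 (a k l) y) (hG0 : ∀ k, G k y = 0) (v w : E) :
    fderiv ℝ (fun z => fderiv ℝ u z v) y w = c * ∑ k, ∑ l, a k l y *
      (fderiv ℝ (G k) y v * fderiv ℝ (G l) y w + fderiv ℝ (G l) y v * fderiv ℝ (G k) y w) := by
  have hDu : (fun z => fderiv ℝ u z v) =ᶠ[𝓝 y] fun z => c • fderiv ℝ (quadForm G a) z v := by
    filter_upwards [hu.fderiv (𝕜 := ℝ)] with z hz
    simp only [hz, fderiv_const_smul_field, Pi.smul_apply, smul_apply]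
  rw [(((hasFDerivAt_fderiv_quadForm_apply hG ha hG0 v).const_smul c).congr_of_eventuallyEq
    hDu).fderiv]
  simp only [smul_apply, sum_apply, add_apply, smul_eq_mul]

end QuadForm

section Matrix

variable {n R : Type*} [Fintype n]

theorem Matrix.mul_mul_transpose_apply [CommSemiring R] (H A : Matrix n n R) (i j : n) :
    (H * A * Hᵀ) i j = ∑ k, ∑ l, H i k * A k l * H j l := by
  simp only [Matrix.mul_apply, Matrix.transpose_apply, Finset.sum_mul]
  exact Finset.sum_comm

theorem Matrix.IsSymm.mul_mul_transpose [CommSemiring R] {A : Matrix n n R} (hA : A.IsSymm)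
    (H : Matrix n n R) : (H * A * Hᵀ).IsSymm := by
  rw [Matrix.IsSymm, Matrix.transpose_mul, Matrix.transpose_mul, Matrix.transpose_transpose,
    hA.eq, Matrix.mul_assoc]

theorem Matrix.IsSymm.sum_sum_mul_add_mul [CommSemiring R] {A : Matrix n n R} (hA : A.IsSymm)
    (H : Matrix n n R) (i j : n) :
    ∑ k, ∑ l, A k l * (H j k * H i l + H j l * H i k) = 2 * (H * A * Hᵀ) i j := by
  have hsum : ∑ k, ∑ l, A k l * (H j k * H i l + H j l * H i k) =
      (H * A * Hᵀ) j i + (H * A * Hᵀ) i j := by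
    simp only [Matrix.mul_mul_transpose_apply, ← Finset.sum_add_distrib]
    exact Finset.sum_congr rfl fun k _ => Finset.sum_congr rfl fun l _ => by ring
  rw [hsum, (hA.mul_mul_transpose H).apply, two_mul]

theorem Matrix.eq_smul_inv_of_mul_mul_transpose_eq_smul [DecidableEq n] {K : Type*} [Field K]
    {A H : Matrix n n K} {c : K} (hA : A.IsSymm) (hH : IsUnit H.det) (hc : c ≠ 0)
    (h : H * A * Hᵀ = c • H) : IsUnit A.det ∧ H = c • A⁻¹ := by
  have hAH : A * Hᵀ = c • 1 := calc
    A * Hᵀ = H⁻¹ * (H * A * Hᵀ) := by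
      rw [Matrix.mul_assoc, Matrix.nonsing_inv_mul_cancel_left _ _ hH]
    _ = c • 1 := by rw [h, Matrix.mul_smul, Matrix.nonsing_inv_mul _ hH]
  have hright : A * (c⁻¹ • Hᵀ) = 1 := by
    rw [Matrix.mul_smul, hAH, smul_smul, inv_mul_cancel₀ hc, one_smul]
  have hHsymm : Hᵀ = H := by
    have := (hA.mul_mul_transpose H).eq
    rwa [h, Matrix.transpose_smul, (IsUnit.mk0 c hc).smul_left_cancel] at this
  refine ⟨Matrix.isUnit_det_of_right_inverse hright, ?_⟩
  rw [Matrix.inv_eq_right_inv hright, smul_smul, mul_inv_cancel₀ hc, one_smul, hHsymm]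

end Matrix

section EuclideanSpace

variable {ι : Type*} [Fintype ι]

theorem EuclideanSpace.gradient_apply [DecidableEq ι] (f : EuclideanSpace ℝ ι → ℝ)
    (x : EuclideanSpace ℝ ι) (i : ι) :
    gradient f x i = fderiv ℝ f x (EuclideanSpace.single i 1) := by
  rw [← inner_gradient_left, EuclideanSpace.inner_single_right]
  simp

theorem EuclideanSpace.inner_toLp_mulVec_self (M : Matrix ι ι ℝ) (v : EuclideanSpace ℝ ι) :
    ⟪v, WithLp.toLp 2 (M *ᵥ v)⟫ = ∑ k, ∑ l, v k * M k l * v l := by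
  rw [EuclideanSpace.inner_toLp_toLp]
  simp only [dotProduct, Matrix.mulVec, star_trivial, Finset.sum_mul]
  exact Finset.sum_congr rfl fun k _ => Finset.sum_congr rfl fun l _ => by ring

end EuclideanSpace

theorem hessian_eq_two_inv_metric_general
    (n : ℕ)
    (Ω : Set (EuclideanSpace ℝ (Fin n))) (hΩ : IsOpen Ω)
    (y : EuclideanSpace ℝ (Fin n)) (hy : y ∈ Ω)
    (A : EuclideanSpace ℝ (Fin n) → Matrix (Fin n) (Fin n) ℝ)
    (hAC1 : ∀ i j, ContDiffOn ℝ 1 (fun x => A x i j) Ω)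
    (hAsymm : ∀ x ∈ Ω, (A x).IsSymm)
    (u : EuclideanSpace ℝ (Fin n) → ℝ)
    (huC2 : ContDiffOn ℝ 2 u Ω)
    (heik : ∀ᶠ x in nhds y, u x = (1 / 4) *
      ⟪(gradient u x : EuclideanSpace ℝ (Fin n)),
        (WithLp.toLp 2 ((A x).mulVec (gradient u x : EuclideanSpace ℝ (Fin n))) :
          EuclideanSpace ℝ (Fin n))⟫)
    (hgrad : gradient u y = 0)
    (H : Matrix (Fin n) (Fin n) ℝ)
    (hH : ∀ i j, H i j =
      fderiv ℝ (fun z => fderiv ℝ u z (EuclideanSpace.single j 1)) y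
        (EuclideanSpace.single i 1))
    (hHinv : IsUnit H.det) :
    IsUnit (A y).det ∧ H = (2 : ℝ) • (A y)⁻¹ := by
  set G : Fin n → EuclideanSpace ℝ (Fin n) → ℝ :=
    fun k z => fderiv ℝ u z (EuclideanSpace.single k 1)
  have hΩy := hΩ.mem_nhds hy
  have hG (k) : ContDiffAt ℝ 1 (G k) y :=
    ((huC2.contDiffAt hΩy).fderiv_right (m := 1) (by norm_num)).clm_apply contDiffAt_const
  have hG0 (k) : G k y = 0 := by
    simp only [G, ← EuclideanSpace.gradient_apply, hgrad, PiLp.zero_apply]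
  have hu : u =ᶠ[𝓝 y] (1 / 4 : ℝ) • quadForm G fun k l x => A x k l := by
    filter_upwards [heik] with x hx
    simp only [hx, EuclideanSpace.inner_toLp_mulVec_self, EuclideanSpace.gradient_apply,
      Pi.smul_apply, smul_eq_mul, quadForm, G]
  have hHG (i k) : fderiv ℝ (G k) y (EuclideanSpace.single i 1) = H i k := (hH i k).symm
  have hM : H * A y * Hᵀ = (2 : ℝ) • H := by
    ext i j
    rw [Matrix.smul_apply, hH, fderiv_fderiv_apply_of_eventuallyEq_smul_quadForm hu hG
      (fun k l => (hAC1 k l).contDiffAt hΩy) hG0]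
    simp only [hHG, (hAsymm y hy).sum_sum_mul_add_mul, smul_eq_mul]
    ring
  exact Matrix.eq_smul_inv_of_mul_mul_transpose_eq_smul (hAsymm y hy) hHinv two_ne_zero hM

/-- If `u` is `C²` and solves the eikonal equation `u = (1/4)⟨∇u, A(x) ∇u⟩` near `y`,
with `∇u(y) = 0` and invertible Hessian `H` at `y`, then `A(y)` is invertible and
`H = 2 A(y)⁻¹`. This identifies the second-order Taylor coefficients of the squared
Riemannian distance as the inverse metric coefficients. -/
theorem hessian_eq_two_inv_metric
    (n : ℕ) (hn : 0 < n)
    (Ω : Set (EuclideanSpace ℝ (Fin n))) (hΩ : IsOpen Ω)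
    (y : EuclideanSpace ℝ (Fin n)) (hy : y ∈ Ω)
    (A : EuclideanSpace ℝ (Fin n) → Matrix (Fin n) (Fin n) ℝ)
    (hAC1 : ∀ i j, ContDiffOn ℝ 1 (fun x => A x i j) Ω)
    (hAsymm : ∀ x ∈ Ω, (A x).IsSymm)
    (u : EuclideanSpace ℝ (Fin n) → ℝ)
    (huC2 : ContDiffOn ℝ 2 u Ω)
    (heik : ∀ᶠ x in nhds y, u x = (1 / 4) *
      ⟪(gradient u x : EuclideanSpace ℝ (Fin n)),
        (WithLp.toLp 2 ((A x).mulVec (gradient u x : EuclideanSpace ℝ (Fin n))) :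
          EuclideanSpace ℝ (Fin n))⟫)
    (hgrad : gradient u y = 0)
    (H : Matrix (Fin n) (Fin n) ℝ)
    (hH : ∀ i j, H i j =
      fderiv ℝ (fun z => fderiv ℝ u z (EuclideanSpace.single j 1)) y
        (EuclideanSpace.single i 1))
    (hHinv : IsUnit H.det) :
    IsUnit (A y).det ∧ H = (2 : ℝ) • (A y)⁻¹ :=
  hessian_eq_two_inv_metric_general n Ω hΩ y hy A hAC1 hAsymm u huC2 heik hgrad H hH hHinv
end

section
/- Let n be a positive integer, let Ω ⊆ ℝⁿ be open and let y ∈ Ω. Let λ₁, …, λₙ : Ω → ℝ be real-analytic functions with λ_i(y) > 0 for each i. Suppose u and v are real-analytic functions on an open ball B ⊆ Ω centered at y, both satisfying the eikonal equation w(x) = (1/4) ∑_{i=1}^n λ_i(x) (∂_i w(x))² for all x ∈ B, and suppose u(y) = v(y) = 0, ∇u(y) = ∇v(y) = 0, and the Hessians of u and v at y both equal the diagonal matrix with entries 2/λ_i(y). Then u = v on a neighborhood of y. -/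
/-!
The difference `w = u - v` of two solutions solves the linear transport equation
`w = Dw · B` with `B = ∑ᵢ λᵢ (∂ᵢu + ∂ᵢv) / 4 • eᵢ` (from `a² - b² = (a + b)(a - b)`), and the
common 2-jet gives `B y = 0`, `DB y = id` and `w = O(‖x - y‖³)`. Near `y` we then have
`‖z - y‖² ≤ 2 ⟪z - y, B z⟫`, so along a backward integral curve of `B` the quantity
`w(γ t) e^{-t}` is constant while `‖γ t - y‖² e^{-t}` is monotone: flowing back for a time `τ`
multiplies `w` by `e^{-τ}` and the distance to `y` by at most `e^{-τ/2}`. Iterating this against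
the cubic bound gives `|w x| ≤ K e^{-kτ/2} ‖x - y‖³` for every `k`, hence `w = 0` near `y`.
-/

open Metric Set Filter Topology Asymptotics Real
open scoped NNReal RealInnerProductSpace

namespace IsPicardLindelof

variable {E : Type*} [NormedAddCommGroup E] [NormedSpace ℝ E] [CompleteSpace E]
  {f : ℝ → E → E} {tmin tmax : ℝ} {t₀ : Icc tmin tmax} {x₀ x : E} {a r L K : ℝ≥0}

theorem exists_eq_forall_mem_Icc_hasDerivWithinAt_mem_closedBall
    (hf : IsPicardLindelof f t₀ x₀ a r L K) (hx : x ∈ closedBall x₀ r) :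
    ∃ α : ℝ → E, α t₀ = x ∧ ∀ t ∈ Icc tmin tmax,
      HasDerivWithinAt α (f t (α t)) (Icc tmin tmax) t ∧ α t ∈ closedBall x₀ a := by
  obtain ⟨α, hα⟩ := ODE.FunSpace.exists_isFixedPt_next hf hx
  refine ⟨α.compProj, by rw [ODE.FunSpace.compProj_val, ← hα, ODE.FunSpace.next_apply₀],
    fun t ht ↦ ⟨?_, α.compProj_mem_closedBall hf.mul_max_le⟩⟩
  apply ODE.hasDerivWithinAt_picard_Icc t₀.2 hf.continuousOn_uncurry
    α.continuous_compProj.continuousOn (fun _ _ ↦ α.compProj_mem_closedBall hf.mul_max_le)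
    x ht |>.congr_of_mem _ ht
  intro t' ht'
  nth_rw 1 [← hα]
  rw [ODE.FunSpace.compProj_of_mem ht', ODE.FunSpace.next_apply]

end IsPicardLindelof

theorem ContDiffAt.exists_integral_curves_mapsTo {E : Type*} [NormedAddCommGroup E]
    [NormedSpace ℝ E] [CompleteSpace E] {B : E → E} {y : E} (hB : ContDiffAt ℝ 1 B y)
    {s : Set E} (hs : s ∈ 𝓝 y) :
    ∃ r > (0 : ℝ), ∃ τ > (0 : ℝ), ∀ x ∈ closedBall y r, ∃ γ : ℝ → E, γ 0 = x ∧
      ∀ t ∈ Icc (-τ) τ, HasDerivWithinAt γ (B (γ t)) (Icc (-τ) τ) t ∧ γ t ∈ s := by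
  obtain ⟨ε, hε, a, r, L, K, hr, hpl⟩ := IsPicardLindelof.of_contDiffAt_one hB
  obtain ⟨δ, hδ, hδs⟩ := nhds_basis_closedBall.mem_iff.mp hs
  have ha : (0 : ℝ) < a := by
    have hle := (hpl 0).mul_max_le
    simp only [add_sub_cancel_left, sub_sub_cancel, max_self] at hle
    have : (0 : ℝ) < r := hr
    nlinarith [L.coe_nonneg]
  set a' : ℝ≥0 := min a δ.toNNReal
  have ha' : 0 < a' := lt_min (mod_cast ha) (Real.toNNReal_pos.mpr hδ)
  obtain ⟨τ, hτ, hpl'⟩ := IsPicardLindelof.exists_shrink_radius hε (hpl 0) (min_le_left a _)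
    (half_lt_self ha')
  refine ⟨a' / 2, by positivity, τ, hτ, fun x hx ↦ ?_⟩
  obtain ⟨γ, hγ0, hγ⟩ := hpl'.exists_eq_forall_mem_Icc_hasDerivWithinAt_mem_closedBall
    (by exact_mod_cast hx)
  rw [zero_sub, zero_add] at hγ
  refine ⟨γ, hγ0, fun t ht ↦ ⟨(hγ t ht).1, hδs (closedBall_subset_closedBall ?_ (hγ t ht).2)⟩⟩
  exact (NNReal.coe_le_coe.mpr (min_le_right _ _)).trans (Real.coe_toNNReal δ hδ.le).le

section IntegralCurve

variable {E : Type*} [NormedAddCommGroup E] [InnerProductSpace ℝ E]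
  {B : E → E} {γ : ℝ → E} {a b : ℝ}

theorem mul_exp_neg_eq_of_eq_fderiv_apply {w : E → ℝ} (hab : a ≤ b)
    (hγ : ∀ t ∈ Icc a b, HasDerivWithinAt γ (B (γ t)) (Icc a b) t)
    (hw : ∀ t ∈ Icc a b, DifferentiableAt ℝ w (γ t) ∧ w (γ t) = fderiv ℝ w (γ t) (B (γ t))) :
    w (γ b) * exp (-b) = w (γ a) * exp (-a) := by
  have hderiv : ∀ t ∈ Icc a b,
      HasDerivWithinAt (fun s ↦ w (γ s) * exp (-s)) 0 (Icc a b) t := by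
    intro t ht
    have hwγ := (hw t ht).1.hasFDerivAt.comp_hasDerivWithinAt t (hγ t ht)
    rw [← (hw t ht).2] at hwγ
    exact (hwγ.fun_mul (hasDerivAt_neg t).exp.hasDerivWithinAt).congr_deriv (by simp)
  refine constant_of_has_deriv_right_zero (fun t ht ↦ (hderiv t ht).continuousWithinAt)
    (fun t ht ↦ (hderiv t (Ico_subset_Icc_self ht)).mono_of_mem_nhdsWithin
      (Icc_mem_nhdsGE_of_mem ht)) b ⟨hab, le_rfl⟩

theorem norm_sub_sq_mul_exp_neg_le {y : E}
    (hγ : ∀ t ∈ Icc a b, HasDerivWithinAt γ (B (γ t)) (Icc a b) t)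
    (hB : ∀ t ∈ Icc a b, ‖γ t - y‖ ^ 2 ≤ 2 * ⟪γ t - y, B (γ t)⟫) (hab : a ≤ b) :
    ‖γ a - y‖ ^ 2 * exp (-a) ≤ ‖γ b - y‖ ^ 2 * exp (-b) := by
  set φ' : ℝ → ℝ := fun t ↦ (2 * ⟪γ t - y, B (γ t)⟫ - ‖γ t - y‖ ^ 2) * exp (-t)
  have hderiv : ∀ t ∈ Icc a b,
      HasDerivWithinAt (fun s ↦ ‖γ s - y‖ ^ 2 * exp (-s)) (φ' t) (Icc a b) t := fun t ht ↦
    (((hγ t ht).sub_const y).norm_sq.fun_mul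
      (hasDerivAt_neg t).exp.hasDerivWithinAt).congr_deriv (by simp only [φ']; ring)
  refine monotoneOn_of_hasDerivWithinAt_nonneg (convex_Icc a b)
    (fun t ht ↦ (hderiv t ht).continuousWithinAt)
    (fun t ht ↦ (hderiv t (interior_subset ht)).mono interior_subset)
    (fun t ht ↦ mul_nonneg (sub_nonneg.mpr (hB t (interior_subset ht))) (exp_pos _).le)
    ⟨le_rfl, hab⟩ ⟨hab, le_rfl⟩ hab

theorem dist_le_exp_mul_and_eq_exp_mul_of_integral_curve {w : E → ℝ} {y : E} {τ : ℝ}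
    (hτ : 0 ≤ τ) (hγ : ∀ t ∈ Icc (-τ) 0, HasDerivWithinAt γ (B (γ t)) (Icc (-τ) 0) t)
    (hw : ∀ t ∈ Icc (-τ) 0, DifferentiableAt ℝ w (γ t) ∧ w (γ t) = fderiv ℝ w (γ t) (B (γ t)))
    (hB : ∀ t ∈ Icc (-τ) 0, ‖γ t - y‖ ^ 2 ≤ 2 * ⟪γ t - y, B (γ t)⟫) :
    dist (γ (-τ)) y ≤ exp (-(τ / 2)) * dist (γ 0) y ∧ w (γ 0) = exp τ * w (γ (-τ)) := by
  have hτ' : -τ ≤ 0 := neg_nonpos.mpr hτ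
  have hsq := norm_sub_sq_mul_exp_neg_le hγ hB hτ'
  have hval := mul_exp_neg_eq_of_eq_fderiv_apply hτ' hγ hw
  rw [neg_neg, neg_zero, exp_zero, mul_one] at hsq hval
  refine ⟨?_, by rw [hval, mul_comm]⟩
  rw [dist_eq_norm, dist_eq_norm, ← sq_le_sq₀ (norm_nonneg _) (by positivity), mul_pow,
    ← exp_nat_mul]
  calc ‖γ (-τ) - y‖ ^ 2 = ‖γ (-τ) - y‖ ^ 2 * exp τ * exp (-τ) := by
        rw [mul_assoc, ← exp_add, add_neg_cancel, exp_zero, mul_one]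
    _ ≤ ‖γ 0 - y‖ ^ 2 * exp (-τ) := by gcongr
    _ = exp (↑2 * -(τ / 2)) * ‖γ 0 - y‖ ^ 2 := by ring_nf

end IntegralCurve

theorem HasFDerivAt.eventually_norm_sub_sq_le_two_inner {E : Type*} [NormedAddCommGroup E]
    [InnerProductSpace ℝ E] {B : E → E} {y : E}
    (hB : HasFDerivAt B (ContinuousLinearMap.id ℝ E) y) (hBy : B y = 0) :
    ∀ᶠ z in 𝓝 y, ‖z - y‖ ^ 2 ≤ 2 * ⟪z - y, B z⟫ := by
  filter_upwards [(hasFDerivAt_iff_isLittleO.mp hB).def (by norm_num : (0 : ℝ) < 1 / 2)]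
    with z hz
  rw [hBy, sub_zero, ContinuousLinearMap.id_apply] at hz
  have hsplit : ⟪z - y, B z⟫ = ‖z - y‖ ^ 2 + ⟪z - y, B z - (z - y)⟫ := by
    rw [inner_sub_right, real_inner_self_eq_norm_sq]; ring
  have hCS := abs_le.mp (abs_real_inner_le_norm (z - y) (B z - (z - y)))
  nlinarith [norm_nonneg (z - y), mul_le_mul_of_nonneg_left hz (norm_nonneg (z - y))]

theorem eqOn_zero_of_abs_le_dist_pow_of_contract {α : Type*} [PseudoMetricSpace α] {f : α → ℝ}
    {s : Set α} {y : α} {K A c : ℝ} {p : ℕ} (hK : 0 ≤ K) (hA : 0 ≤ A) (hc : 0 ≤ c)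
    (hAc : A * c ^ p < 1) (hbound : ∀ x ∈ s, |f x| ≤ K * dist x y ^ p)
    (hstep : ∀ x ∈ s, ∃ x' ∈ s, dist x' y ≤ c * dist x y ∧ |f x| ≤ A * |f x'|) :
    EqOn f 0 s := by
  have hiter : ∀ k : ℕ, ∀ x ∈ s, |f x| ≤ K * (A * c ^ p) ^ k * dist x y ^ p := by
    intro k
    induction k with
    | zero => simpa using hbound
    | succ k ih =>
      intro x hx
      obtain ⟨x', hx', hdist, hfx⟩ := hstep x hx
      calc |f x| ≤ A * |f x'| := hfx
        _ ≤ A * (K * (A * c ^ p) ^ k * dist x' y ^ p) := by gcongr; exact ih x' hx'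
        _ ≤ A * (K * (A * c ^ p) ^ k * (c * dist x y) ^ p) := by gcongr
        _ = K * (A * c ^ p) ^ (k + 1) * dist x y ^ p := by ring
  intro x hx
  have hlim : Tendsto (fun k : ℕ ↦ K * (A * c ^ p) ^ k * dist x y ^ p) atTop (𝓝 0) := by
    simpa using ((tendsto_pow_atTop_nhds_zero_of_lt_one (by positivity) hAc).const_mul
      K).mul_const (dist x y ^ p)
  exact abs_nonpos_iff.mp (ge_of_tendsto hlim (Eventually.of_forall fun k ↦ hiter k x hx))

section Jet

variable {𝕜 : Type*} [NontriviallyNormedField 𝕜] {E F : Type*} [NormedAddCommGroup E]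
  [NormedSpace 𝕜 E] [NormedAddCommGroup F] [NormedSpace 𝕜 F] {f g : E → F} {x : E}

theorem AnalyticAt.isBigO_norm_sub_pow_of_iteratedFDeriv_eq_zero [CharZero 𝕜] [CompleteSpace F]
    (hf : AnalyticAt 𝕜 f x) {n : ℕ} (h : ∀ k < n, iteratedFDeriv 𝕜 k f x = 0) :
    f =O[𝓝 x] fun z ↦ ‖z - x‖ ^ n := by
  obtain ⟨p, hp⟩ := hf
  have hsum : ∀ z, p.partialSum n z = 0 := fun z ↦ Finset.sum_eq_zero fun k hk ↦ by
    obtain ⟨r, hr⟩ := hp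
    have hcoeff := hr.factorial_smul z k
    rw [h k (Finset.mem_range.mp hk), zero_apply, ← Nat.cast_smul_eq_nsmul 𝕜] at hcoeff
    exact (smul_eq_zero.mp hcoeff).resolve_left (mod_cast k.factorial_ne_zero)
  have hO := (hp.isBigO_sub_partialSum_pow n).comp_tendsto
    (tendsto_sub_nhds_zero_iff.mpr (tendsto_id (x := 𝓝 x)))
  simpa [Function.comp_def, hsum] using hO

theorem iteratedFDeriv_sub_eq_zero_of_lt_three (hf : ContDiffAt 𝕜 2 f x)
    (hg : ContDiffAt 𝕜 2 g x) (h0 : f x = g x) (h1 : fderiv 𝕜 f x = fderiv 𝕜 g x)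
    (h2 : fderiv 𝕜 (fderiv 𝕜 f) x = fderiv 𝕜 (fderiv 𝕜 g) x) :
    ∀ k < 3, iteratedFDeriv 𝕜 k (f - g) x = 0 := by
  intro k hk
  rw [iteratedFDeriv_sub_apply (hf.of_le (by norm_cast; omega))
    (hg.of_le (by norm_cast; omega)), sub_eq_zero]
  interval_cases k
  · ext; simp [h0]
  · ext; simp [iteratedFDeriv_one_apply, h1]
  · ext; simp [iteratedFDeriv_two_apply, h2]

theorem fderiv_fderiv_apply (hf : DifferentiableAt 𝕜 (fderiv 𝕜 f) x) (v w : E) :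
    fderiv 𝕜 (fderiv 𝕜 f) x v w = fderiv 𝕜 (fun z ↦ fderiv 𝕜 f z w) x v := by
  rw [fderiv_clm_apply hf (differentiableAt_const w)]
  simp

end Jet

theorem eventuallyEq_zero_of_eq_fderiv_apply {E : Type*} [NormedAddCommGroup E]
    [InnerProductSpace ℝ E] [CompleteSpace E] {B : E → E} {w : E → ℝ} {y : E}
    (hB : ContDiffAt ℝ 1 B y) (hBy : B y = 0)
    (hDB : HasFDerivAt B (ContinuousLinearMap.id ℝ E) y)
    (hw : ∀ᶠ z in 𝓝 y, DifferentiableAt ℝ w z ∧ w z = fderiv ℝ w z (B z))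
    (hw3 : w =O[𝓝 y] fun z ↦ ‖z - y‖ ^ 3) :
    w =ᶠ[𝓝 y] 0 := by
  obtain ⟨r, hr, τ, hτ, hcurve⟩ :=
    hB.exists_integral_curves_mapsTo (hw.and (hDB.eventually_norm_sub_sq_le_two_inner hBy))
  obtain ⟨K, hK, hKw⟩ := hw3.exists_nonneg
  obtain ⟨ρ, hρ, hρK⟩ := nhds_basis_closedBall.eventually_iff.mp hKw.bound
  refine mem_of_superset (closedBall_mem_nhds y (lt_min hr hρ))
    (eqOn_zero_of_abs_le_dist_pow_of_contract (y := y) (p := 3) hK (exp_pos τ).le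
      (exp_pos (-(τ / 2))).le ?_ (fun x hx ↦ ?_) (fun x hx ↦ ?_))
  · rw [← exp_nat_mul, ← exp_add, exp_lt_one_iff]
    linarith
  · simpa [dist_eq_norm] using hρK (closedBall_subset_closedBall (min_le_right r ρ) hx)
  · obtain ⟨γ, rfl, hγ⟩ := hcurve _ (closedBall_subset_closedBall (min_le_left r ρ) hx)
    have hsub : Icc (-τ) 0 ⊆ Icc (-τ) τ := Icc_subset_Icc_right hτ.le
    obtain ⟨hdist, hval⟩ := dist_le_exp_mul_and_eq_exp_mul_of_integral_curve hτ.le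
      (fun t ht ↦ (hγ t (hsub ht)).1.mono hsub) (fun t ht ↦ (hγ t (hsub ht)).2.1)
      (fun t ht ↦ (hγ t (hsub ht)).2.2)
    refine ⟨γ (-τ), ?_, hdist, by rw [hval, abs_mul, abs_of_pos (exp_pos τ)]⟩
    exact mem_closedBall.mpr (hdist.trans (mul_le_of_le_one_left dist_nonneg
      (exp_le_one_iff.mpr (by linarith)) |>.trans hx))

section Eikonal

open EuclideanSpace

variable {ι : Type*} [Fintype ι] [DecidableEq ι]

theorem EuclideanSpace.continuousLinearMap_ext {F : Type*} [AddCommGroup F] [Module ℝ F]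
    [TopologicalSpace F] {f g : EuclideanSpace ℝ ι →L[ℝ] F}
    (h : ∀ i, f (single i 1) = g (single i 1)) : f = g :=
  ContinuousLinearMap.coe_injective <| (PiLp.basisFun 2 ℝ ι).ext fun i ↦ by simpa using h i

theorem EuclideanSpace.fderiv_fderiv_eq {F : Type*} [NormedAddCommGroup F] [NormedSpace ℝ F]
    {f g : EuclideanSpace ℝ ι → F} {x : EuclideanSpace ℝ ι}
    (hf : DifferentiableAt ℝ (fderiv ℝ f) x) (hg : DifferentiableAt ℝ (fderiv ℝ g) x)
    (h : ∀ i j, fderiv ℝ (fun z ↦ fderiv ℝ f z (single j 1)) x (single i 1) =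
      fderiv ℝ (fun z ↦ fderiv ℝ g z (single j 1)) x (single i 1)) :
    fderiv ℝ (fderiv ℝ f) x = fderiv ℝ (fderiv ℝ g) x :=
  continuousLinearMap_ext fun i ↦ continuousLinearMap_ext fun j ↦ by
    rw [fderiv_fderiv_apply hf, fderiv_fderiv_apply hg, h]

noncomputable def eikonalField (lam : ι → EuclideanSpace ℝ ι → ℝ)
    (u v : EuclideanSpace ℝ ι → ℝ) (z : EuclideanSpace ℝ ι) : EuclideanSpace ℝ ι :=
  ∑ i, (lam i z * (fderiv ℝ u z (single i 1) + fderiv ℝ v z (single i 1)) / 4) • single i 1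

variable {lam : ι → EuclideanSpace ℝ ι → ℝ} {u v : EuclideanSpace ℝ ι → ℝ}
  {z : EuclideanSpace ℝ ι}

theorem sub_eq_fderiv_apply_eikonalField_sub_fderiv_apply
    (hu : u z = 1 / 4 * ∑ i, lam i z * (fderiv ℝ u z (single i 1)) ^ 2)
    (hv : v z = 1 / 4 * ∑ i, lam i z * (fderiv ℝ v z (single i 1)) ^ 2) :
    u z - v z =
      fderiv ℝ u z (eikonalField lam u v z) - fderiv ℝ v z (eikonalField lam u v z) := by
  simp only [eikonalField, map_sum, map_smul, smul_eq_mul, hu, hv, Finset.mul_sum,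
    ← Finset.sum_sub_distrib]
  exact Finset.sum_congr rfl fun i _ ↦ by ring

theorem eikonalField_eq_zero (hu : fderiv ℝ u z = 0) (hv : fderiv ℝ v z = 0) :
    eikonalField lam u v z = 0 := by
  simp [eikonalField, hu, hv]

theorem contDiffAt_eikonalField (hlam : ∀ i, ContDiffAt ℝ 1 (lam i) z)
    (hu : ContDiffAt ℝ 1 (fderiv ℝ u) z) (hv : ContDiffAt ℝ 1 (fderiv ℝ v) z) :
    ContDiffAt ℝ 1 (eikonalField lam u v) z := by
  unfold eikonalField
  fun_prop

theorem hasFDerivAt_eikonalField (hlam : ∀ i, DifferentiableAt ℝ (lam i) z)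
    (hlam0 : ∀ i, lam i z ≠ 0)
    (hu : ∀ i, DifferentiableAt ℝ (fun z ↦ fderiv ℝ u z (single i 1)) z)
    (hv : ∀ i, DifferentiableAt ℝ (fun z ↦ fderiv ℝ v z (single i 1)) z)
    (hu1 : fderiv ℝ u z = 0) (hv1 : fderiv ℝ v z = 0)
    (huH : ∀ i j, fderiv ℝ (fun z ↦ fderiv ℝ u z (single j 1)) z (single i 1) =
      if i = j then 2 / lam i z else 0)
    (hvH : ∀ i j, fderiv ℝ (fun z ↦ fderiv ℝ v z (single j 1)) z (single i 1) =
      if i = j then 2 / lam i z else 0) :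
    HasFDerivAt (eikonalField lam u v) (ContinuousLinearMap.id ℝ _) z := by
  have hcoord : ∀ i, HasFDerivAt
      (fun z ↦ lam i z * (fderiv ℝ u z (single i 1) + fderiv ℝ v z (single i 1)) / 4)
      ((lam i z / 4) • (fderiv ℝ (fun z ↦ fderiv ℝ u z (single i 1)) z +
        fderiv ℝ (fun z ↦ fderiv ℝ v z (single i 1)) z)) z := fun i ↦
    (((hlam i).hasFDerivAt.mul ((hu i).hasFDerivAt.add (hv i).hasFDerivAt)).mul_const
      4⁻¹).congr_fderiv (by simp [hu1, hv1, smul_smul, div_eq_inv_mul])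
  refine (HasFDerivAt.fun_sum fun i _ ↦ (hcoord i).smul_const (single i 1)).congr_fderiv
    (continuousLinearMap_ext fun j ↦ ?_)
  simp only [sum_apply, ContinuousLinearMap.smulRight_apply, smul_apply, add_apply, huH, hvH,
    ContinuousLinearMap.id_apply]
  rw [Finset.sum_eq_single j (fun i _ hij ↦ by simp [Ne.symm hij]) (by simp)]
  convert one_smul ℝ (single j (1 : ℝ))
  simp only [if_true, smul_eq_mul]
  field_simp [hlam0 j]
  norm_num

end Eikonal

theorem analytic_eikonal_local_uniqueness_general
    (n : ℕ)
    (Ω : Set (EuclideanSpace ℝ (Fin n)))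
    (y : EuclideanSpace ℝ (Fin n)) (hy : y ∈ Ω)
    (lam : Fin n → EuclideanSpace ℝ (Fin n) → ℝ)
    (hlamAn : ∀ i, AnalyticOnNhd ℝ (lam i) Ω)
    (hlamPos : ∀ i, 0 < lam i y)
    (r : ℝ) (hr : 0 < r)
    (u v : EuclideanSpace ℝ (Fin n) → ℝ)
    (huAn : AnalyticOnNhd ℝ u (Metric.ball y r))
    (hvAn : AnalyticOnNhd ℝ v (Metric.ball y r))
    (hueik : ∀ x ∈ Metric.ball y r, u x = (1 / 4) *
      ∑ i, lam i x * (fderiv ℝ u x (EuclideanSpace.single i 1)) ^ 2)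
    (hveik : ∀ x ∈ Metric.ball y r, v x = (1 / 4) *
      ∑ i, lam i x * (fderiv ℝ v x (EuclideanSpace.single i 1)) ^ 2)
    (hu0 : u y = 0) (hv0 : v y = 0)
    (hugrad : gradient u y = 0) (hvgrad : gradient v y = 0)
    (huHess : ∀ i j,
      fderiv ℝ (fun z => fderiv ℝ u z (EuclideanSpace.single j 1)) y
          (EuclideanSpace.single i 1)
        = if i = j then 2 / lam i y else 0)
    (hvHess : ∀ i j,
      fderiv ℝ (fun z => fderiv ℝ v z (EuclideanSpace.single j 1)) y
          (EuclideanSpace.single i 1)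
        = if i = j then 2 / lam i y else 0) :
    ∃ s ∈ nhds y, Set.EqOn u v s := by
  have hyr : y ∈ ball y r := mem_ball_self hr
  have hu1 : fderiv ℝ u y = 0 := by rw [← toDual_gradient, hugrad, map_zero]
  have hv1 : fderiv ℝ v y = 0 := by rw [← toDual_gradient, hvgrad, map_zero]
  have hu2 := (huAn.fderiv y hyr).differentiableAt
  have hv2 := (hvAn.fderiv y hyr).differentiableAt
  have hjet := iteratedFDeriv_sub_eq_zero_of_lt_three (huAn y hyr).contDiffAt
    (hvAn y hyr).contDiffAt (hu0.trans hv0.symm) (hu1.trans hv1.symm)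
    (EuclideanSpace.fderiv_fderiv_eq hu2 hv2 fun i j ↦ (huHess i j).trans (hvHess i j).symm)
  have hpde : ∀ᶠ z in 𝓝 y, DifferentiableAt ℝ (u - v) z ∧
      (u - v) z = fderiv ℝ (u - v) z (eikonalField lam u v z) := by
    filter_upwards [isOpen_ball.mem_nhds hyr] with z hz
    refine ⟨((huAn z hz).sub (hvAn z hz)).differentiableAt, ?_⟩
    rw [Pi.sub_apply, fderiv_sub (huAn z hz).differentiableAt (hvAn z hz).differentiableAt]
    exact sub_eq_fderiv_apply_eikonalField_sub_fderiv_apply (hueik z hz) (hveik z hz)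
  have hzero := eventuallyEq_zero_of_eq_fderiv_apply
    (contDiffAt_eikonalField (fun i ↦ (hlamAn i y hy).contDiffAt)
      (huAn.fderiv y hyr).contDiffAt (hvAn.fderiv y hyr).contDiffAt)
    (eikonalField_eq_zero hu1 hv1)
    (hasFDerivAt_eikonalField (fun i ↦ (hlamAn i y hy).differentiableAt)
      (fun i ↦ (hlamPos i).ne') (fun i ↦ hu2.clm_apply (differentiableAt_const _))
      (fun i ↦ hv2.clm_apply (differentiableAt_const _)) hu1 hv1 huHess hvHess)
    hpde (((huAn y hyr).sub (hvAn y hyr)).isBigO_norm_sub_pow_of_iteratedFDeriv_eq_zero hjet)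
  exact ⟨_, hzero, fun z hz ↦ sub_eq_zero.mp hz⟩

/-- Local uniqueness for real-analytic solutions of the diagonalized eikonal equation
`w = (1/4) ∑ᵢ λᵢ (∂ᵢ w)²`: two analytic solutions on a ball centered at `y` with value `0`,
gradient `0` and Hessian `diag (2/λᵢ(y))` at `y` coincide near `y`. -/
theorem analytic_eikonal_local_uniqueness
    (n : ℕ) (hn : 0 < n)
    (Ω : Set (EuclideanSpace ℝ (Fin n))) (hΩ : IsOpen Ω)
    (y : EuclideanSpace ℝ (Fin n)) (hy : y ∈ Ω)
    (lam : Fin n → EuclideanSpace ℝ (Fin n) → ℝ)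
    (hlamAn : ∀ i, AnalyticOnNhd ℝ (lam i) Ω)
    (hlamPos : ∀ i, 0 < lam i y)
    (r : ℝ) (hr : 0 < r) (hB : Metric.ball y r ⊆ Ω)
    (u v : EuclideanSpace ℝ (Fin n) → ℝ)
    (huAn : AnalyticOnNhd ℝ u (Metric.ball y r))
    (hvAn : AnalyticOnNhd ℝ v (Metric.ball y r))
    (hueik : ∀ x ∈ Metric.ball y r, u x = (1 / 4) *
      ∑ i, lam i x * (fderiv ℝ u x (EuclideanSpace.single i 1)) ^ 2)
    (hveik : ∀ x ∈ Metric.ball y r, v x = (1 / 4) *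
      ∑ i, lam i x * (fderiv ℝ v x (EuclideanSpace.single i 1)) ^ 2)
    (hu0 : u y = 0) (hv0 : v y = 0)
    (hugrad : gradient u y = 0) (hvgrad : gradient v y = 0)
    (huHess : ∀ i j,
      fderiv ℝ (fun z => fderiv ℝ u z (EuclideanSpace.single j 1)) y
          (EuclideanSpace.single i 1)
        = if i = j then 2 / lam i y else 0)
    (hvHess : ∀ i j,
      fderiv ℝ (fun z => fderiv ℝ v z (EuclideanSpace.single j 1)) y
          (EuclideanSpace.single i 1)
        = if i = j then 2 / lam i y else 0) :
    ∃ s ∈ nhds y, Set.EqOn u v s :=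
  analytic_eikonal_local_uniqueness_general n Ω y hy lam hlamAn hlamPos r hr u v huAn hvAn hueik
    hveik hu0 hv0 hugrad hvgrad huHess hvHess
end
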